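/- Let δ > 0, q ≥ 0, T > 0, and t ≥ 0. Then ∫_0^t e^{δ(τ - t)} (T+τ)^(-q) dτ ≤ δ^(-1) T^(-q) (e^{-δ t/2} - e^{-δ t}) + δ^(-1) (T + t/2)^(-q) (1 - e^{-δ t/2}). -/

import Mathlib

/-! On `[0, t/2]` bound `(T + τ)^(-q)` by `T^(-q)`, on `[t/2, t]` by `(T + t/2)^(-q)`, and integrate
the exponential weight exactly on each half. -/

open intervalIntegral Real Set MeasureTheory

theorem integral_exp_mul_sub {δ : ℝ} (hδ : δ ≠ 0) (t a b : ℝ) :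
    ∫ τ in a..b, exp (δ * (τ - t)) = δ⁻¹ * (exp (δ * (b - t)) - exp (δ * (a - t))) := by
  simp only [mul_sub, integral_comp_mul_sub (fun x => exp x) hδ, integral_exp, smul_eq_mul]

theorem integral_exp_mul_sub_mul_le {δ : ℝ} (hδ : δ ≠ 0) {t a b C : ℝ} {g : ℝ → ℝ} (hab : a ≤ b)
    (hg : IntervalIntegrable g volume a b) (hgC : ∀ τ ∈ Icc a b, g τ ≤ C) :
    ∫ τ in a..b, exp (δ * (τ - t)) * g τ ≤
      δ⁻¹ * C * (exp (δ * (b - t)) - exp (δ * (a - t))) := by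
  have hexp : Continuous fun τ => exp (δ * (τ - t)) := by fun_prop
  calc ∫ τ in a..b, exp (δ * (τ - t)) * g τ
      ≤ ∫ τ in a..b, exp (δ * (τ - t)) * C := by
        refine integral_mono_on hab (hg.continuousOn_mul hexp.continuousOn)
          ((hexp.mul continuous_const).intervalIntegrable a b) ?_
        exact fun τ hτ => mul_le_mul_of_nonneg_left (hgC τ hτ) (exp_nonneg _)
    _ = δ⁻¹ * C * (exp (δ * (b - t)) - exp (δ * (a - t))) := by
        rw [intervalIntegral.integral_mul_const, integral_exp_mul_sub hδ]
        ring

theorem intervalIntegrable_const_add_rpow {T a b : ℝ} (q : ℝ) (hTa : 0 < T + a) (hab : a ≤ b) :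
    IntervalIntegrable (fun τ => (T + τ) ^ q) volume a b := by
  refine ((continuous_const_add T).continuousOn.rpow_const ?_).intervalIntegrable
  rw [uIcc_of_le hab]
  exact fun τ hτ => Or.inl (by linarith [hτ.1])

/-- For `δ > 0`, `q ≥ 0`, `T > 0` and `t ≥ 0`,
`∫_0^t e^{δ(τ-t)} (T+τ)^(-q) dτ ≤ δ⁻¹ T^(-q) (e^{-δt/2} - e^{-δt})
  + δ⁻¹ (T+t/2)^(-q) (1 - e^{-δt/2})`. -/
theorem exponential_polynomial_integral_bound
    (δ q T t : ℝ) (hδ : 0 < δ) (hq : 0 ≤ q) (hT : 0 < T) (ht : 0 ≤ t) :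
    (∫ τ in (0 : ℝ)..t, Real.exp (δ * (τ - t)) * (T + τ) ^ (-q)) ≤
      δ⁻¹ * T ^ (-q) * (Real.exp (-(δ * t) / 2) - Real.exp (-(δ * t))) +
      δ⁻¹ * (T + t / 2) ^ (-q) * (1 - Real.exp (-(δ * t) / 2)) := by
  have hpow_anti : ∀ {x y : ℝ}, 0 ≤ x → x ≤ y → (T + y) ^ (-q) ≤ (T + x) ^ (-q) :=
    fun hx hxy => rpow_le_rpow_of_nonpos (by linarith) (by linarith) (by linarith)
  have hleft : IntervalIntegrable (fun τ => (T + τ) ^ (-q)) volume 0 (t / 2) :=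
    intervalIntegrable_const_add_rpow _ (by linarith) (by linarith)
  have hright : IntervalIntegrable (fun τ => (T + τ) ^ (-q)) volume (t / 2) t :=
    intervalIntegrable_const_add_rpow _ (by linarith) (by linarith)
  have hfirst := integral_exp_mul_sub_mul_le (t := t) (C := T ^ (-q)) hδ.ne' (by linarith) hleft
    fun τ hτ => by simpa using hpow_anti le_rfl hτ.1
  have hsecond := integral_exp_mul_sub_mul_le (t := t) hδ.ne' (by linarith) hright
    fun τ hτ => hpow_anti (by linarith) hτ.1
  have hexp : Continuous fun τ => exp (δ * (τ - t)) := by fun_prop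
  rw [← integral_add_adjacent_intervals (hleft.continuousOn_mul hexp.continuousOn)
    (hright.continuousOn_mul hexp.continuousOn)]
  rw [show δ * (t / 2 - t) = -(δ * t) / 2 by ring, show δ * (0 - t) = -(δ * t) by ring] at hfirst
  rw [show δ * (t / 2 - t) = -(δ * t) / 2 by ring, sub_self, mul_zero, exp_zero] at hsecond
  exact add_le_add hfirst hsecond
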